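/- A forest language over (A,B) is recognized by a semigroup automaton if and only if it is recognized by a morphism into a finite forest algebra. -/

import Mathlib

/- Trees over a two-sorted alphabet: leaves labeled in `A`, inner nodes labeled in `B`. -/
mutual
inductive FTree (A B : Type) : Type where
  | leaf (a : A) : FTree A B
  | node (b : B) (f : FForest A B) : FTree A B
inductive FForest (A B : Type) : Type where
  | single (t : FTree A B) : FForest A B
  | cons (t : FTree A B) (f : FForest A B) : FForest A B
end

/-- The (nonempty) list of trees constituting a forest. -/
def FForest.toList {A B : Type} : FForest A B → List (FTree A B)
  | .single t => [t]
  | .cons t f => t :: f.toList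

/-- Concatenation `s + t` of forests. -/
def FForest.append {A B : Type} : FForest A B → FForest A B → FForest A B
  | .single t, f => .cons t f
  | .cons t f', f => .cons t (f'.append f)

/-- The children of the root of a tree. -/
def FTree.children {A B : Type} : FTree A B → List (FTree A B)
  | .leaf _ => []
  | .node _ f => f.toList

/-- The subtree of `t` rooted at the node reached by the path of child indices, if any.
Nodes of a tree are identified with the valid such paths. -/
def FTree.subtreeAt {A B : Type} : List ℕ → FTree A B → Option (FTree A B)
  | [], t => some t
  | i :: p, t =>
    match t.children[i]? with
    | some c => FTree.subtreeAt p c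
    | none => none

/-- Formulas of the temporal logic EF + F⁻¹ over the two-sorted alphabet `(A, B)`. -/
inductive EFFormula (A B : Type) : Type where
  | leafLab (a : A) : EFFormula A B
  | innerLab (b : B) : EFFormula A B
  | not (φ : EFFormula A B) : EFFormula A B
  | and (φ ψ : EFFormula A B) : EFFormula A B
  | EF (φ : EFFormula A B) : EFFormula A B
  | Finv (φ : EFFormula A B) : EFFormula A B

/-- Satisfaction of an EF+F⁻¹ formula at the node `x` (a path) of the tree `t`.
`EF φ` holds at `x` iff `φ` holds at some proper descendant of `x`, and `F⁻¹ φ`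
holds at `x` iff `φ` holds at some proper ancestor of `x`. -/
def EFSat {A B : Type} (t : FTree A B) : List ℕ → EFFormula A B → Prop
  | x, .leafLab a => FTree.subtreeAt x t = some (.leaf a)
  | x, .innerLab b => ∃ f, FTree.subtreeAt x t = some (.node b f)
  | x, .not φ => ¬ EFSat t x φ
  | x, .and φ ψ => EFSat t x φ ∧ EFSat t x ψ
  | x, .EF φ => ∃ y : List ℕ, x <+: y ∧ x ≠ y ∧ (FTree.subtreeAt y t).isSome ∧ EFSat t y φ
  | x, .Finv φ => ∃ y : List ℕ, y <+: x ∧ y ≠ x ∧ EFSat t y φ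

/-- A formula is true in a tree if it holds at its root. -/
def TreeSat {A B : Type} (t : FTree A B) (φ : EFFormula A B) : Prop := EFSat t [] φ

/-- A tree language is tree-definable if some EF+F⁻¹ formula is true in exactly its trees. -/
def TreeDefinable {A B : Type} (L : Set (FTree A B)) : Prop :=
  ∃ φ : EFFormula A B, ∀ t, t ∈ L ↔ TreeSat t φ

/-- Boolean combinations of languages of the form "some tree of the forest satisfies φ". -/
inductive ForestFormula (A B : Type) : Type where
  | ex (φ : EFFormula A B) : ForestFormula A B
  | not (Φ : ForestFormula A B) : ForestFormula A B
  | and (Φ Ψ : ForestFormula A B) : ForestFormula A B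

def ForestSat {A B : Type} (f : FForest A B) : ForestFormula A B → Prop
  | .ex φ => ∃ t ∈ f.toList, TreeSat t φ
  | .not Φ => ¬ ForestSat f Φ
  | .and Φ Ψ => ForestSat f Φ ∧ ForestSat f Ψ

/-- A forest language is forest-definable in EF+F⁻¹ if it is a Boolean combination of
languages of the form "some tree of the forest satisfies φ". -/
def ForestDefinable {A B : Type} (L : Set (FForest A B)) : Prop :=
  ∃ Φ : ForestFormula A B, ∀ f, f ∈ L ↔ ForestSat f Φ
/-- A forest algebra `(H, V)`: a semigroup `(H, +)`, a monoid `(V, ·)` with unit `□`,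
a faithful monoid action of `V` on `H`, and mixed operations `h + v` and `v + h`. -/
structure ForestAlgebra (H V : Type) where
  addH : H → H → H
  mulV : V → V → V
  unit : V
  act : V → H → H
  addL : H → V → V
  addR : V → H → V
  addH_assoc : ∀ f g h, addH (addH f g) h = addH f (addH g h)
  mulV_assoc : ∀ u v w, mulV (mulV u v) w = mulV u (mulV v w)
  unit_mul : ∀ v, mulV unit v = v
  mul_unit : ∀ v, mulV v unit = v
  act_unit : ∀ h, act unit h = h
  act_mul : ∀ v w h, act (mulV v w) h = act v (act w h)
  faithful : ∀ v w, (∀ h, act v h = act w h) → v = w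
  addL_act : ∀ h v g, act (addL h v) g = addH h (act v g)
  addR_act : ∀ v h g, act (addR v h) g = addH (act v g) h

namespace ForestAlgebra

variable {H V : Type}

/-- `v^n` in the vertical monoid. -/
def powV (FA : ForestAlgebra H V) (v : V) : ℕ → V
  | 0 => FA.unit
  | n + 1 => FA.mulV v (FA.powV v n)

/-- The relation `u ⊣ w`: `u = v₀v₁⋯vₙ` and `w = v₀(h₁+v₁)⋯(hₙ+vₙ)` for some
`v₀,…,vₙ ∈ V` and `h₁,…,hₙ ∈ H`. -/
def Strip (FA : ForestAlgebra H V) (u w : V) : Prop :=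
  ∃ (v0 : V) (L : List (H × V)),
    u = L.foldl (fun acc hv => FA.mulV acc hv.2) v0 ∧
    w = L.foldl (fun acc hv => FA.mulV acc (FA.addL hv.1 hv.2)) v0

/-- Identity (1): `h + h = h` and `g + h = h + g`. -/
def Id1 (FA : ForestAlgebra H V) : Prop :=
  (∀ h, FA.addH h h = h) ∧ (∀ g h, FA.addH g h = FA.addH h g)

/-- Identity (2): `(vw)^ω = (vw)^ω w (vw)^ω`, where an identity involving `ω`-powers
asserts equality for all sufficiently large exponents. -/
def Id2 (FA : ForestAlgebra H V) : Prop :=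
  ∀ v w : V, ∃ m, ∀ n ≥ m,
    FA.powV (FA.mulV v w) n =
      FA.mulV (FA.mulV (FA.powV (FA.mulV v w) n) w) (FA.powV (FA.mulV v w) n)

/-- Identity (3): `(u₁w₁)^ω (u₂w₂)^ω = (u₁w₁)^ω u₁ w₂ (u₂w₂)^ω` whenever
`u₁ ⊣ u₂` and `w₁ ⊣ w₂`. -/
def Id3 (FA : ForestAlgebra H V) : Prop :=
  ∀ u1 u2 w1 w2 : V, FA.Strip u1 u2 → FA.Strip w1 w2 →
    ∃ m, ∀ n ≥ m,
      FA.mulV (FA.powV (FA.mulV u1 w1) n) (FA.powV (FA.mulV u2 w2) n) =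
        FA.mulV (FA.mulV (FA.mulV (FA.powV (FA.mulV u1 w1) n) u1) w2)
          (FA.powV (FA.mulV u2 w2) n)

/-- The context type `v` is reachable from `w` if `v = wu` for some `u ∈ V`. -/
def CtxReach (FA : ForestAlgebra H V) (w v : V) : Prop := ∃ u, v = FA.mulV w u

/-- Two context types are in the same context component if each is reachable from the other. -/
def SameCC (FA : ForestAlgebra H V) (v w : V) : Prop := FA.CtxReach v w ∧ FA.CtxReach w v

/-- The forest type `g` is reachable from `h` if `g = uh` for some `u ∈ V`. -/
def HReach (FA : ForestAlgebra H V) (h g : H) : Prop := ∃ u, g = FA.act u h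

/-- Two forest types are in the same forest component if each is reachable from the other. -/
def SameFC (FA : ForestAlgebra H V) (g h : H) : Prop := FA.HReach g h ∧ FA.HReach h g

end ForestAlgebra
/- A morphism `α : A^Δ B → (H,V)` from the free forest algebra is determined by the images
`fA : A → H` of the leaf labels and `fB : B → V` of the contexts `b□`; it extends to all
forests as follows. -/
mutual
def evalTree {A B H V : Type} (FA : ForestAlgebra H V) (fA : A → H) (fB : B → V) :
    FTree A B → H
  | .leaf a => fA a
  | .node b f => FA.act (fB b) (evalForest FA fA fB f)
def evalForest {A B H V : Type} (FA : ForestAlgebra H V) (fA : A → H) (fB : B → V) :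
    FForest A B → H
  | .single t => evalTree FA fA fB t
  | .cons t f => FA.addH (evalTree FA fA fB t) (evalForest FA fA fB f)
end

/-- The morphism given by `(fA, fB)` recognizes the forest language `L` if membership
`t ∈ L` depends only on `α(t)`. -/
def Recognizes {A B H V : Type} (FA : ForestAlgebra H V) (fA : A → H) (fB : B → V)
    (L : Set (FForest A B)) : Prop :=
  ∀ s t : FForest A B, evalForest FA fA fB s = evalForest FA fA fB t → (s ∈ L ↔ t ∈ L)

/-- A semigroup automaton over `(A,B)`: a finite semigroup `(H,+)` together with maps
`βA : A → H` (initial states) and `βB : B → H^H` (transitions). -/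
structure SemigroupAutomaton (A B H : Type) where
  add : H → H → H
  add_assoc : ∀ f g h, add (add f g) h = add f (add g h)
  βA : A → H
  βB : B → H → H

/- The value `β(t) ∈ H` assigned by a semigroup automaton to every forest, by the rules
`β(a) = βA(a)`, `β(s₁+⋯+sₙ) = β(s₁)+⋯+β(sₙ)` and `β(bt) = βB(b)(β(t))`. -/
mutual
def autEvalTree {A B H : Type} (M : SemigroupAutomaton A B H) : FTree A B → H
  | .leaf a => M.βA a
  | .node b f => M.βB b (autEvalForest M f)
def autEvalForest {A B H : Type} (M : SemigroupAutomaton A B H) : FForest A B → H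
  | .single t => autEvalTree M t
  | .cons t f => M.add (autEvalTree M t) (autEvalForest M f)
end

/-- A semigroup automaton recognizes `L` if membership `t ∈ L` depends only on `β(t)`. -/
def AutRecognizes {A B H : Type} (M : SemigroupAutomaton A B H)
    (L : Set (FForest A B)) : Prop :=
  ∀ s t : FForest A B, autEvalForest M s = autEvalForest M t → (s ∈ L ↔ t ∈ L)

/-!
A semigroup automaton is a forest algebra in disguise: the functions `H → H`, acting by
application, form a (faithful) forest algebra over `(H, +)` in which `βB b` is the image of
the context `b□`, and conversely a morphism into `(H, V)` is the automaton on `(H, +)` whose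
transition for `b` is the action of the image of `b□`. In both directions the two
evaluations of a forest coincide, so the recognized languages are the same.
-/

namespace SemigroupAutomaton

variable {A B H : Type}

def toForestAlgebra (M : SemigroupAutomaton A B H) : ForestAlgebra H (H → H) where
  addH := M.add
  mulV := (· ∘ ·)
  unit := id
  act := id
  addL h v := fun g => M.add h (v g)
  addR v h := fun g => M.add (v g) h
  addH_assoc := M.add_assoc
  mulV_assoc _ _ _ := rfl
  unit_mul _ := rfl
  mul_unit _ := rfl
  act_unit _ := rfl
  act_mul _ _ _ := rfl
  faithful _ _ h := funext h
  addL_act _ _ _ := rfl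
  addR_act _ _ _ := rfl

mutual
theorem evalTree_toForestAlgebra (M : SemigroupAutomaton A B H) :
    ∀ t : FTree A B, evalTree M.toForestAlgebra M.βA M.βB t = autEvalTree M t
  | .leaf _ => rfl
  | .node b f => congrArg (M.βB b) (evalForest_toForestAlgebra M f)
theorem evalForest_toForestAlgebra (M : SemigroupAutomaton A B H) :
    ∀ f : FForest A B, evalForest M.toForestAlgebra M.βA M.βB f = autEvalForest M f
  | .single t => evalTree_toForestAlgebra M t
  | .cons t f => congrArg₂ M.add (evalTree_toForestAlgebra M t) (evalForest_toForestAlgebra M f)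
end

end SemigroupAutomaton

namespace ForestAlgebra

variable {A B H V : Type}

def toAutomaton (FA : ForestAlgebra H V) (fA : A → H) (fB : B → V) :
    SemigroupAutomaton A B H where
  add := FA.addH
  add_assoc := FA.addH_assoc
  βA := fA
  βB b := FA.act (fB b)

mutual
theorem autEvalTree_toAutomaton (FA : ForestAlgebra H V) (fA : A → H) (fB : B → V) :
    ∀ t : FTree A B, autEvalTree (FA.toAutomaton fA fB) t = evalTree FA fA fB t
  | .leaf _ => rfl
  | .node b f => congrArg (FA.act (fB b)) (autEvalForest_toAutomaton FA fA fB f)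
theorem autEvalForest_toAutomaton (FA : ForestAlgebra H V) (fA : A → H) (fB : B → V) :
    ∀ f : FForest A B, autEvalForest (FA.toAutomaton fA fB) f = evalForest FA fA fB f
  | .single t => autEvalTree_toAutomaton FA fA fB t
  | .cons t f =>
    congrArg₂ FA.addH (autEvalTree_toAutomaton FA fA fB t) (autEvalForest_toAutomaton FA fA fB f)
end

end ForestAlgebra

/-- A forest language over `(A,B)` is recognized by a semigroup automaton if
and only if it is recognized by a morphism into a finite forest algebra. -/
theorem semigroup_automaton_iff_forest_algebra {A B : Type} [Finite A] [Finite B]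
    (L : Set (FForest A B)) :
    (∃ (H : Type) (_ : Finite H) (M : SemigroupAutomaton A B H), AutRecognizes M L) ↔
    (∃ (H V : Type) (_ : Finite H) (_ : Finite V) (FA : ForestAlgebra H V)
        (fA : A → H) (fB : B → V), Recognizes FA fA fB L) := by
  constructor
  · rintro ⟨H, hH, M, hM⟩
    refine ⟨H, H → H, hH, inferInstance, M.toForestAlgebra, M.βA, M.βB, fun s t hst => ?_⟩
    exact hM s t (by simpa only [M.evalForest_toForestAlgebra] using hst)
  · rintro ⟨H, V, hH, -, FA, fA, fB, hFA⟩
    refine ⟨H, hH, FA.toAutomaton fA fB, fun s t hst => ?_⟩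
    exact hFA s t (by simpa only [FA.autEvalForest_toAutomaton] using hst)
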